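/- Let (G,w) be a min-unique weighted directed graph with positive integer weights, and for nodes s,t and weight value ℓ let c_ℓ denote the number of s-t-paths (walks) in G of total weight exactly ℓ. If there exists an s-t-path in G and ℓ₀ is the minimum weight of an s-t-path, then c_{ℓ₀} = 1 (so in particular c_{ℓ₀} is odd); and if no s-t-path exists then c_ℓ = 0 for all ℓ. Hence t is reachable from s if and only if c_ℓ is odd for some ℓ ≤ ℓ₀ where ℓ₀ ranges over possible minimal weights, i.e., iff some coefficient c_ℓ is odd for ℓ at most the maximal possible minimal path weight. -/
import Mathlib


variable {V : Type*}

/-- Sum of edge weights along a list of nodes. -/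
def natListWeight (w : V → V → ℕ) : List V → ℕ
  | a :: b :: l => w a b + natListWeight w (b :: l)
  | _ => 0

/-- `l` is a (directed) walk from `s` to `t` along edge relation `E`. -/
def IsWalk (E : V → V → Prop) (l : List V) (s t : V) : Prop :=
  l ≠ [] ∧ l.head? = some s ∧ l.getLast? = some t ∧ l.Chain' E

/-- In a min-unique weighted graph with positive weights, for nodes `s, t` and
`c_ℓ` the number of `s`-`t`-walks of weight `ℓ`: if `ℓ₀` is the minimum weight
of an `s`-`t`-walk then `c_{ℓ₀} = 1`; if no walk exists then all `c_ℓ = 0`;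
and `t` is reachable from `s` iff some `c_ℓ` is odd. -/
theorem stmt19 [Fintype V] (E : V → V → Prop) (w : V → V → ℕ)
    (hpos : ∀ u v, E u v → 0 < w u v)
    (hminunique : ∀ s t : V, ∀ p q : List V, IsWalk E p s t → IsWalk E q s t →
      (∀ r, IsWalk E r s t → natListWeight w p ≤ natListWeight w r) →
      (∀ r, IsWalk E r s t → natListWeight w q ≤ natListWeight w r) → p = q) :
    ∀ s t : V,
      (∀ ℓ₀ : ℕ, (∃ p, IsWalk E p s t ∧ natListWeight w p = ℓ₀) →
        (∀ p, IsWalk E p s t → ℓ₀ ≤ natListWeight w p) →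
        {p : List V | IsWalk E p s t ∧ natListWeight w p = ℓ₀}.ncard = 1) ∧
      ((¬ ∃ p, IsWalk E p s t) →
        ∀ ℓ : ℕ, {p : List V | IsWalk E p s t ∧ natListWeight w p = ℓ}.ncard = 0) ∧
      ((∃ p, IsWalk E p s t) ↔
        ∃ ℓ : ℕ, Odd ({p : List V | IsWalk E p s t ∧ natListWeight w p = ℓ}.ncard)) := by
  intro s t
  have part1 : ∀ ℓ₀ : ℕ, (∃ p, IsWalk E p s t ∧ natListWeight w p = ℓ₀) →
      (∀ p, IsWalk E p s t → ℓ₀ ≤ natListWeight w p) →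
      {p : List V | IsWalk E p s t ∧ natListWeight w p = ℓ₀}.ncard = 1 := by
    intro ℓ₀ ⟨p, hp, hw⟩ hmin
    have hset : {q : List V | IsWalk E q s t ∧ natListWeight w q = ℓ₀} = {p} := by
      apply Set.eq_singleton_iff_unique_mem.mpr
      refine ⟨⟨hp, hw⟩, ?_⟩
      rintro q ⟨hq, hwq⟩
      exact hminunique s t q p hq hp
        (fun r hr => hwq ▸ hmin r hr) (fun r hr => hw ▸ hmin r hr)
    rw [hset, Set.ncard_singleton]
  refine ⟨part1, ?_, ?_⟩
  · intro hne ℓ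
    have : {p : List V | IsWalk E p s t ∧ natListWeight w p = ℓ} = ∅ := by
      ext q; simp only [Set.mem_setOf_eq, Set.mem_empty_iff_false, iff_false]
      rintro ⟨hq, -⟩; exact hne ⟨q, hq⟩
    rw [this, Set.ncard_empty]
  · constructor
    · rintro ⟨p, hp⟩
      set W : Set ℕ := {ℓ | ∃ q, IsWalk E q s t ∧ natListWeight w q = ℓ} with hW
      have hWne : W.Nonempty := ⟨natListWeight w p, p, hp, rfl⟩
      have hmem : sInf W ∈ W := Nat.sInf_mem hWne
      refine ⟨sInf W, ?_⟩
      rw [part1 (sInf W) hmem (fun q hq => Nat.sInf_le ⟨q, hq, rfl⟩)]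
      exact odd_one
    · rintro ⟨ℓ, hodd⟩
      have hne : {p : List V | IsWalk E p s t ∧ natListWeight w p = ℓ}.Nonempty := by
        rw [Set.nonempty_iff_ne_empty]
        intro h
        rw [h, Set.ncard_empty] at hodd
        exact (Nat.not_odd_iff_even.mpr Even.zero) hodd
      obtain ⟨q, hq, -⟩ := hne
      exact ⟨q, hq⟩
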